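/- arXiv:1912.13279 — 3 statements merged into one kernel-verified Lean document; each statement's English description precedes it below -/
import Mathlib

section
/- Let γ : [a,b] → ℝ^N be a C^{1,α} map with |γ'(t)| ≥ c > 0 for all t. Then the arc length parameterization of γ (with respect to the Euclidean metric) is also of class C^{1,α}. -/
open Set MeasureTheory

/-- Auxiliary: the normalization map is Lipschitz away from the origin. -/
lemma aux_norm_lip {E : Type*} [NormedAddCommGroup E] [NormedSpace ℝ E]
    (w z : E) (c : ℝ) (hc : 0 < c) (hw : c ≤ ‖w‖) (hz : c ≤ ‖z‖) :
    ‖‖w‖⁻¹ • w - ‖z‖⁻¹ • z‖ ≤ (2 / c) * ‖w - z‖ := by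
  have hw0 : (0:ℝ) < ‖w‖ := lt_of_lt_of_le hc hw
  have hz0 : (0:ℝ) < ‖z‖ := lt_of_lt_of_le hc hz
  have key : ‖w‖⁻¹ • w - ‖z‖⁻¹ • z = ‖w‖⁻¹ • (w - z) + (‖w‖⁻¹ - ‖z‖⁻¹) • z := by
    rw [smul_sub, sub_smul]; abel
  rw [key]
  have h1 : ‖‖w‖⁻¹ • (w - z)‖ ≤ c⁻¹ * ‖w - z‖ := by
    rw [norm_smul, Real.norm_eq_abs, abs_of_pos (inv_pos.2 hw0)]
    exact mul_le_mul_of_nonneg_right (inv_anti₀ hc hw) (norm_nonneg _)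
  have h2 : ‖(‖w‖⁻¹ - ‖z‖⁻¹) • z‖ ≤ c⁻¹ * ‖w - z‖ := by
    rw [norm_smul, Real.norm_eq_abs]
    have heq : ‖w‖⁻¹ - ‖z‖⁻¹ = (‖z‖ - ‖w‖) * (‖w‖⁻¹ * ‖z‖⁻¹) := by
      field_simp
    rw [heq, abs_mul, abs_of_pos (mul_pos (inv_pos.2 hw0) (inv_pos.2 hz0))]
    have hnn : |‖z‖ - ‖w‖| ≤ ‖w - z‖ := by
      rw [abs_sub_comm]
      exact abs_norm_sub_norm_le w z
    calc |‖z‖ - ‖w‖| * (‖w‖⁻¹ * ‖z‖⁻¹) * ‖z‖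
        = |‖z‖ - ‖w‖| * ‖w‖⁻¹ := by field_simp
      _ ≤ ‖w - z‖ * c⁻¹ :=
          mul_le_mul hnn (inv_anti₀ hc hw) (inv_nonneg.2 hw0.le) (norm_nonneg _)
      _ = c⁻¹ * ‖w - z‖ := mul_comm _ _
  calc ‖‖w‖⁻¹ • (w - z) + (‖w‖⁻¹ - ‖z‖⁻¹) • z‖
      ≤ ‖‖w‖⁻¹ • (w - z)‖ + ‖(‖w‖⁻¹ - ‖z‖⁻¹) • z‖ := norm_add_le _ _
    _ ≤ c⁻¹ * ‖w - z‖ + c⁻¹ * ‖w - z‖ := add_le_add h1 h2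
    _ = (2 / c) * ‖w - z‖ := by ring

/-- If `γ : [a,b] → ℝ^N` is `C^{1,α}` with `|γ'| ≥ c > 0`, then the
arc length parameterization `γ ∘ σ` (where `σ` is the inverse of the arclength
function `s t = ∫_a^t |γ'(u)| du`) is also of class `C^{1,α}`: it is
differentiable on `[0, s(b)]` with an `α`-Hölder continuous derivative. -/
theorem stmt_1 (N : ℕ) (a b : ℝ) (hab : a < b) (α : ℝ) (hα : α ∈ Ioc (0:ℝ) 1)
    (γ γ' : ℝ → EuclideanSpace ℝ (Fin N)) (Cα c : ℝ) (hc : 0 < c)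
    (hderiv : ∀ t ∈ Icc a b, HasDerivWithinAt γ (γ' t) (Icc a b) t)
    (hholder : ∀ t ∈ Icc a b, ∀ u ∈ Icc a b, ‖γ' t - γ' u‖ ≤ Cα * |t - u| ^ α)
    (hspeed : ∀ t ∈ Icc a b, c ≤ ‖γ' t‖)
    (s : ℝ → ℝ) (hs : ∀ t ∈ Icc a b, s t = ∫ u in a..t, ‖γ' u‖)
    (σ : ℝ → ℝ) (hσmem : ∀ u ∈ Icc 0 (s b), σ u ∈ Icc a b)
    (hσinv : ∀ t ∈ Icc a b, σ (s t) = t) (hsinv : ∀ u ∈ Icc 0 (s b), s (σ u) = u) :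
    ∃ (g' : ℝ → EuclideanSpace ℝ (Fin N)) (C' : ℝ),
      (∀ u ∈ Icc 0 (s b), HasDerivWithinAt (γ ∘ σ) (g' u) (Icc 0 (s b)) u) ∧
      (∀ u ∈ Icc 0 (s b), ∀ v ∈ Icc 0 (s b), ‖g' u - g' v‖ ≤ C' * |u - v| ^ α) := by
  have hα0 : (0:ℝ) < α := hα.1
  set T : Set ℝ := Icc a b with hT
  set S : Set ℝ := Icc 0 (s b) with hS
  set C0 : ℝ := max Cα 0 with hC0def
  have hC0 : 0 ≤ C0 := le_max_right _ _
  have hhold' : ∀ t ∈ T, ∀ u ∈ T, ‖γ' t - γ' u‖ ≤ C0 * |t - u| ^ α := by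
    intro t ht u hu
    refine (hholder t ht u hu).trans ?_
    exact mul_le_mul_of_nonneg_right (le_max_left _ _)
      (Real.rpow_nonneg (abs_nonneg _) _)
  -- continuity of γ' on T
  have hγ'cont : ContinuousOn γ' T := by
    intro x hx
    rw [ContinuousWithinAt, tendsto_iff_dist_tendsto_zero]
    apply squeeze_zero' (Filter.Eventually.of_forall fun t => dist_nonneg)
    · filter_upwards [self_mem_nhdsWithin] with t ht
      show dist (γ' t) (γ' x) ≤ C0 * |t - x| ^ α
      rw [dist_eq_norm]
      exact hhold' t ht x hx
    · have h1 : Filter.Tendsto (fun t : ℝ => |t - x|) (nhdsWithin x T) (nhds 0) := by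
        have : Filter.Tendsto (fun t : ℝ => |t - x|) (nhds x) (nhds 0) := by
          have : Continuous (fun t : ℝ => |t - x|) :=
            (continuous_id.sub continuous_const).abs
          simpa using this.tendsto x
        exact this.mono_left nhdsWithin_le_nhds
      have h2 : Filter.Tendsto (fun y : ℝ => y ^ α) (nhds 0) (nhds 0) := by
        have := (Real.continuousAt_rpow_const 0 α (Or.inr hα0.le)).tendsto
        simpa [Real.zero_rpow (ne_of_gt hα0)] using this
      have := (h2.comp h1).const_mul C0
      simpa using this
  have hncont : ContinuousOn (fun t => ‖γ' t‖) T := hγ'cont.norm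
  have hab' : a ≤ b := hab.le
  -- integrability
  have huIcc : ∀ x ∈ T, ∀ y ∈ T, uIcc x y ⊆ T := by
    intro x hx y hy
    rw [uIcc]
    exact Icc_subset_Icc (le_min hx.1 hy.1) (max_le hx.2 hy.2)
  have hint : ∀ x ∈ T, ∀ y ∈ T, IntervalIntegrable (fun u => ‖γ' u‖) volume x y := by
    intro x hx y hy
    apply ContinuousOn.intervalIntegrable
    exact hncont.mono (huIcc x hx y hy)
  have haT : a ∈ T := left_mem_Icc.2 hab'
  have hbT : b ∈ T := right_mem_Icc.2 hab'
  -- s y - s x = ∫ x..y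
  have hs_sub : ∀ x ∈ T, ∀ y ∈ T, s y - s x = ∫ u in x..y, ‖γ' u‖ := by
    intro x hx y hy
    rw [hs y hy, hs x hx]
    exact intervalIntegral.integral_interval_sub_left (hint a haT y hy) (hint a haT x hx)
  -- lower bound on increments of s
  have hs_lower : ∀ x ∈ T, ∀ y ∈ T, x ≤ y → c * (y - x) ≤ s y - s x := by
    intro x hx y hy hxy
    rw [hs_sub x hx y hy]
    have : ∫ u in x..y, c ≤ ∫ u in x..y, ‖γ' u‖ := by
      apply intervalIntegral.integral_mono_on hxy intervalIntegrable_const (hint x hx y hy)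
      intro z hz
      exact hspeed z ⟨le_trans hx.1 hz.1, le_trans hz.2 hy.2⟩
    simpa [mul_comm] using this
  -- derivative of s
  have hs_deriv : ∀ x ∈ T, HasDerivWithinAt s (‖γ' x‖) T x := by
    intro x hx
    rw [hasDerivWithinAt_iff_isLittleO]
    rw [Asymptotics.isLittleO_iff]
    intro ε hε
    have hδ : ∃ δ : ℝ, 0 < δ ∧ C0 * δ ^ α ≤ ε := by
      refine ⟨(ε / (C0 + 1)) ^ α⁻¹, Real.rpow_pos_of_pos (div_pos hε (by linarith)) _, ?_⟩
      rw [Real.rpow_inv_rpow (le_of_lt (div_pos hε (by linarith))) (ne_of_gt hα0)]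
      rw [div_eq_mul_inv, ← mul_assoc]
      calc C0 * ε * (C0 + 1)⁻¹ ≤ (C0 + 1) * ε * (C0 + 1)⁻¹ := by
            apply mul_le_mul_of_nonneg_right _ (by positivity)
            exact mul_le_mul_of_nonneg_right (by linarith) hε.le
        _ = ε := by field_simp
    obtain ⟨δ, hδ0, hδε⟩ := hδ
    rw [Metric.nhdsWithin_basis_ball.eventually_iff]
    refine ⟨δ, hδ0, ?_⟩
    rintro t ⟨htb, htT⟩
    have htd : |t - x| < δ := by rwa [Metric.mem_ball, Real.dist_eq] at htb
    have hbound : ‖s t - s x - (t - x) • ‖γ' x‖‖ ≤ C0 * |t - x| ^ α * |t - x| := by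
      have heq : s t - s x - (t - x) • ‖γ' x‖ = ∫ u in x..t, (‖γ' u‖ - ‖γ' x‖) := by
        rw [intervalIntegral.integral_sub (hint x hx t htT) intervalIntegrable_const,
          intervalIntegral.integral_const, ← hs_sub x hx t htT]
      rw [heq]
      have := intervalIntegral.norm_integral_le_of_norm_le_const
        (C := C0 * |t - x| ^ α) (f := fun u => ‖γ' u‖ - ‖γ' x‖) (a := x) (b := t) ?_
      · calc ‖∫ u in x..t, (‖γ' u‖ - ‖γ' x‖)‖ ≤ C0 * |t - x| ^ α * |t - x| := this
          _ = C0 * |t - x| ^ α * |t - x| := rfl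
      · intro z hz
        have hzI : z ∈ T := by
          rcases hz with ⟨h1, h2⟩
          constructor
          · rcases le_total x t with h | h
            · simp [h] at h1 h2; exact le_trans hx.1 h1.le
            · simp [h] at h1 h2; exact le_trans htT.1 h1.le
          · rcases le_total x t with h | h
            · simp [h] at h1 h2; exact le_trans h2 htT.2
            · simp [h] at h1 h2; exact le_trans h2 hx.2
        have hzd : |z - x| ≤ |t - x| := by
          rw [abs_sub_le_iff]
          rcases hz with ⟨h1, h2⟩
          rcases le_total x t with h | h
          · simp [h] at h1 h2
            constructor
            · rw [abs_of_nonneg (by linarith : (0:ℝ) ≤ t - x)]; linarith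
            · rw [abs_of_nonneg (by linarith : (0:ℝ) ≤ t - x)]; linarith
          · simp [h] at h1 h2
            constructor
            · rw [abs_of_nonpos (by linarith : t - x ≤ 0)]; linarith
            · rw [abs_of_nonpos (by linarith : t - x ≤ 0)]; linarith
        have h1 : ‖(‖γ' z‖ - ‖γ' x‖ : ℝ)‖ ≤ ‖γ' z - γ' x‖ := by
          rw [Real.norm_eq_abs]; exact abs_norm_sub_norm_le _ _
        refine h1.trans ((hhold' z hzI x hx).trans ?_)
        exact mul_le_mul_of_nonneg_left
          (Real.rpow_le_rpow (abs_nonneg _) hzd hα0.le) hC0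
    refine hbound.trans ?_
    rw [Real.norm_eq_abs]
    have : C0 * |t - x| ^ α ≤ ε := by
      refine le_trans ?_ hδε
      exact mul_le_mul_of_nonneg_left
        (Real.rpow_le_rpow (abs_nonneg _) (le_of_lt htd) hα0.le) hC0
    exact mul_le_mul_of_nonneg_right this (abs_nonneg _)
  -- σ is Lipschitz with constant c⁻¹
  have hσlip : ∀ u ∈ S, ∀ v ∈ S, |σ u - σ v| ≤ c⁻¹ * |u - v| := by
    have key : ∀ u ∈ S, ∀ v ∈ S, σ u ≤ σ v → |σ u - σ v| ≤ c⁻¹ * |u - v| := by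
      intro u hu v hv hle
      have h2 := hs_lower (σ u) (hσmem u hu) (σ v) (hσmem v hv) hle
      rw [hsinv u hu, hsinv v hv] at h2
      have h1 : 0 ≤ σ v - σ u := by linarith
      have h3 : 0 ≤ v - u := le_trans (mul_nonneg hc.le h1) h2
      rw [abs_sub_comm, abs_of_nonneg h1, abs_sub_comm, abs_of_nonneg h3,
        inv_mul_eq_div, le_div_iff₀ hc]
      linarith
    intro u hu v hv
    rcases le_total (σ u) (σ v) with h | h
    · exact key u hu v hv h
    · rw [abs_sub_comm, abs_sub_comm u v]; exact key v hv u hu h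
  have hσcont : ContinuousOn σ S := by
    apply LipschitzOnWith.continuousOn (K := ⟨c⁻¹, inv_nonneg.2 hc.le⟩)
    apply LipschitzOnWith.of_dist_le_mul
    intro x hx y hy
    rw [Real.dist_eq, Real.dist_eq]
    exact hσlip x hx y hy
  -- derivative of σ
  have hσ_deriv : ∀ u ∈ S, HasDerivWithinAt σ (‖γ' (σ u)‖⁻¹) S u := by
    intro u hu
    set x₀ := σ u with hx₀
    have hx₀T : x₀ ∈ T := hσmem u hu
    have hn : c ≤ ‖γ' x₀‖ := hspeed x₀ hx₀T
    have hn0 : ‖γ' x₀‖ ≠ 0 := ne_of_gt (lt_of_lt_of_le hc hn)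
    have hsx₀ : s x₀ = u := hsinv u hu
    rw [hasDerivWithinAt_iff_tendsto_slope]
    have hslopes : Filter.Tendsto (slope s x₀) (nhdsWithin x₀ (T \ {x₀})) (nhds ‖γ' x₀‖) :=
      hasDerivWithinAt_iff_tendsto_slope.1 (hs_deriv x₀ hx₀T)
    have hinv : Filter.Tendsto (fun y => (slope s x₀ y)⁻¹) (nhdsWithin x₀ (T \ {x₀}))
        (nhds ‖γ' x₀‖⁻¹) := hslopes.inv₀ hn0
    have hmap : Filter.Tendsto σ (nhdsWithin u (S \ {u})) (nhdsWithin x₀ (T \ {x₀})) := by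
      rw [tendsto_nhdsWithin_iff]
      constructor
      · exact (hσcont u hu).mono_left (nhdsWithin_mono u diff_subset)
      · filter_upwards [self_mem_nhdsWithin] with v hv
        refine ⟨hσmem v hv.1, ?_⟩
        intro hcon
        apply hv.2
        have : s (σ v) = s x₀ := by rw [hcon]
        rw [hsinv v hv.1, hsx₀] at this
        simpa using this
    have hcomp := hinv.comp hmap
    apply hcomp.congr'
    filter_upwards [self_mem_nhdsWithin] with v hv
    have hv1 : s (σ v) = v := hsinv v hv.1
    show (slope s x₀ (σ v))⁻¹ = slope σ u v
    rw [slope_def_field, slope_def_field, hv1, hsx₀, inv_div]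
  -- conclusion
  refine ⟨fun u => ‖γ' (σ u)‖⁻¹ • γ' (σ u), (2 / c) * C0 * c⁻¹ ^ α, ?_, ?_⟩
  · intro u hu
    exact HasDerivWithinAt.scomp u (hderiv (σ u) (hσmem u hu)) (hσ_deriv u hu)
      (fun v hv => hσmem v hv)
  · intro u hu v hv
    have hx := hσmem u hu
    have hy := hσmem v hv
    have h1 : ‖‖γ' (σ u)‖⁻¹ • γ' (σ u) - ‖γ' (σ v)‖⁻¹ • γ' (σ v)‖
        ≤ (2 / c) * ‖γ' (σ u) - γ' (σ v)‖ :=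
      aux_norm_lip _ _ c hc (hspeed _ hx) (hspeed _ hy)
    have h2 : ‖γ' (σ u) - γ' (σ v)‖ ≤ C0 * |σ u - σ v| ^ α := hhold' _ hx _ hy
    have h3 : |σ u - σ v| ^ α ≤ (c⁻¹ * |u - v|) ^ α :=
      Real.rpow_le_rpow (abs_nonneg _) (hσlip u hu v hv) hα0.le
    have h4 : (c⁻¹ * |u - v|) ^ α = c⁻¹ ^ α * |u - v| ^ α :=
      Real.mul_rpow (inv_nonneg.2 hc.le) (abs_nonneg _)
    have h2c : (0:ℝ) ≤ 2 / c := by positivity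
    calc ‖‖γ' (σ u)‖⁻¹ • γ' (σ u) - ‖γ' (σ v)‖⁻¹ • γ' (σ v)‖
        ≤ (2 / c) * ‖γ' (σ u) - γ' (σ v)‖ := h1
      _ ≤ (2 / c) * (C0 * (c⁻¹ ^ α * |u - v| ^ α)) := by
          apply mul_le_mul_of_nonneg_left _ h2c
          refine h2.trans ?_
          rw [← h4]
          exact mul_le_mul_of_nonneg_left h3 hC0
      _ = (2 / c) * C0 * c⁻¹ ^ α * |u - v| ^ α := by ring
end

section
/- In the first Heisenberg group ℍ¹ = ℝ³ with group law (x,y,t)·(x',y',t') = (x+x', y+y', t+t' + (xy' − yx')/2), dilations δ_r(x,y,t) = (rx, ry, r²t), and a homogeneous norm ‖·‖ with d(p,q) = ‖q⁻¹ p‖: let γ : [0,1] → ℍ¹ be a C^{1,α} curve with γ(t₀) = 0 and γ'(t₀) = (a, b, 0), and suppose γ is horizontal in the sense that γ₃'(t) = (γ₁(t) γ₂'(t) − γ₂(t) γ₁'(t))/2 for all t. Let L(t) = ((t−t₀)a, (t−t₀)b, 0). Then d(γ(t), L(t)) ≲ |t − t₀|^{1 + α/2} for all t ∈ [0,1], with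 implicit constant depending on γ. -/
/-!
Both estimates come from one mean-value bound: a function vanishing at `t₀` whose derivative
is `O(|t - t₀|^β)` is itself `O(|t - t₀|^(β+1))`. Applied to `γᵢ - (t - t₀)·γᵢ'(t₀)`, the Hölder
condition gives the horizontal error `O(|t - t₀|^(1+α))`. The vertical coordinate of `L(t)⁻¹γ(t)`
is `γ₃ - (t - t₀)(aγ₂ - bγ₁)/2`; by horizontality its derivative is a combination of the
horizontal errors with bounded coefficients, hence `O(|t - t₀|^(1+α))`, and the vertical error is
`O(|t - t₀|^(2+α))`. Since the homogeneous norm takes the square root of the vertical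
coordinate, both contribute `O(|t - t₀|^(1+α/2))`.
-/

open Set

/-- The Heisenberg group product on `ℝ³`:
`(x,y,t)·(x',y',t') = (x+x', y+y', t+t'+(xy'−yx')/2)`. -/
noncomputable def heisMul (p q : ℝ × ℝ × ℝ) : ℝ × ℝ × ℝ :=
  (p.1 + q.1, p.2.1 + q.2.1, p.2.2 + q.2.2 + (p.1 * q.2.1 - p.2.1 * q.1) / 2)

/-- A homogeneous norm on the Heisenberg group: `‖(x,y,t)‖ = max(|(x,y)|, |t|^{1/2})`. -/
noncomputable def heisNorm (p : ℝ × ℝ × ℝ) : ℝ :=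
  max (Real.sqrt (p.1 ^ 2 + p.2.1 ^ 2)) (Real.sqrt |p.2.2|)

/-- The left-invariant homogeneous distance `d(p,q) = ‖q⁻¹ p‖`, with `q⁻¹ = −q`. -/
noncomputable def heisDist (p q : ℝ × ℝ × ℝ) : ℝ :=
  heisNorm (heisMul (-q.1, -q.2.1, -q.2.2) p)

section MeanValue

variable {s : Set ℝ} {φ φ' : ℝ → ℝ} {x₀ K β : ℝ}

theorem abs_sub_le_of_abs_deriv_le_rpow (hs : Convex ℝ s) (hx₀ : x₀ ∈ s) (hK : 0 ≤ K)
    (hβ : 0 ≤ β) (hφ : ∀ x ∈ s, HasDerivWithinAt φ (φ' x) s x)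
    (hφ' : ∀ x ∈ s, |φ' x| ≤ K * |x - x₀| ^ β) {x : ℝ} (hx : x ∈ s) :
    |φ x - φ x₀| ≤ K * |x - x₀| ^ (β + 1) := by
  have hsub : uIcc x₀ x ⊆ s := hs.ordConnected.uIcc_subset hx₀ hx
  have hbound : ∀ v ∈ uIcc x₀ x, ‖φ' v‖ ≤ K * |x - x₀| ^ β := fun v hv =>
    (hφ' v (hsub hv)).trans <| mul_le_mul_of_nonneg_left
      (Real.rpow_le_rpow (abs_nonneg _) (abs_sub_left_of_mem_uIcc hv) hβ) hK
  calc |φ x - φ x₀|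
      ≤ K * |x - x₀| ^ β * |x - x₀| :=
        Convex.norm_image_sub_le_of_norm_hasDerivWithin_le
          (fun v hv => (hφ v (hsub hv)).mono hsub) hbound (convex_uIcc x₀ x)
          left_mem_uIcc right_mem_uIcc
    _ = K * |x - x₀| ^ (β + 1) := by
        rw [Real.rpow_add_one' (abs_nonneg _) (by positivity), mul_assoc]

variable {f g : ℝ → ℝ} {C α : ℝ}

theorem abs_sub_sub_le_of_holder_deriv (hs : Convex ℝ s) (hx₀ : x₀ ∈ s) (hC : 0 ≤ C)
    (hα : 0 ≤ α) (hf : ∀ x ∈ s, HasDerivWithinAt f (g x) s x)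
    (hg : ∀ x ∈ s, |g x - g x₀| ≤ C * |x - x₀| ^ α) {x : ℝ} (hx : x ∈ s) :
    |f x - f x₀ - (x - x₀) * g x₀| ≤ C * |x - x₀| ^ (α + 1) := by
  have hderiv : ∀ v ∈ s,
      HasDerivWithinAt (fun v => f v - (v - x₀) * g x₀) (g v - g x₀) s v := fun v hv =>
    ((hf v hv).sub (((hasDerivWithinAt_id v s).sub_const x₀).mul_const (g x₀))).congr_deriv
      (by simp)
  simpa [sub_right_comm] using
    abs_sub_le_of_abs_deriv_le_rpow hs hx₀ hC hα hderiv hg hx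

theorem abs_add_le_of_holder (hC : 0 ≤ C) (hα : 0 ≤ α) {x : ℝ} (hx : |x - x₀| ≤ 1)
    (hg : |g x - g x₀| ≤ C * |x - x₀| ^ α) : |g x + g x₀| ≤ C + 2 * |g x₀| :=
  calc |g x + g x₀| = |(g x - g x₀) + 2 * g x₀| := by ring_nf
    _ ≤ |g x - g x₀| + 2 * |g x₀| := (abs_add_le _ _).trans_eq (by rw [abs_mul, abs_two])
    _ ≤ C * 1 + 2 * |g x₀| := by
        gcongr; exact hg.trans (by gcongr; exact Real.rpow_le_one (abs_nonneg _) hx hα)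
    _ = C + 2 * |g x₀| := by ring

end MeanValue

section Heisenberg

theorem heisDist_horizontal (x y z p q : ℝ) :
    heisDist (x, y, z) (p, q, 0) =
      max (Real.sqrt ((x - p) ^ 2 + (y - q) ^ 2)) (Real.sqrt |z - (p * y - q * x) / 2|) := by
  simp only [heisDist, heisMul, heisNorm]
  congr 3 <;> ring

theorem heisDist_horizontal_le {x y z p q A B r : ℝ} (hr : 0 ≤ r)
    (hx : |x - p| ≤ A * r) (hy : |y - q| ≤ A * r) (hz : |z - (p * y - q * x) / 2| ≤ B * r ^ 2) :
    heisDist (x, y, z) (p, q, 0) ≤ (2 * A + Real.sqrt B) * r := by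
  have hA : 0 ≤ A * r := (abs_nonneg _).trans hx
  rw [heisDist_horizontal, max_le_iff]
  constructor
  · have hxy : Real.sqrt ((x - p) ^ 2 + (y - q) ^ 2) ≤ |x - p| + |y - q| := by
      rw [Real.sqrt_le_left (by positivity)]
      nlinarith [sq_abs (x - p), sq_abs (y - q), abs_nonneg (x - p), abs_nonneg (y - q)]
    nlinarith [Real.sqrt_nonneg B, mul_nonneg (Real.sqrt_nonneg B) hr]
  · calc Real.sqrt |z - (p * y - q * x) / 2| ≤ Real.sqrt (B * r ^ 2) := Real.sqrt_le_sqrt hz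
      _ = Real.sqrt B * r := by rw [Real.sqrt_mul' _ (by positivity), Real.sqrt_sq hr]
      _ ≤ (2 * A + Real.sqrt B) * r := by nlinarith

theorem heisDist_horizontal_le_rpow {x y z p q E B r α : ℝ} (hr₀ : 0 ≤ r) (hr₁ : r ≤ 1)
    (hα : 0 ≤ α) (hE : 0 ≤ E) (hx : |x - p| ≤ E * r ^ (α + 1)) (hy : |y - q| ≤ E * r ^ (α + 1))
    (hz : |z - (p * y - q * x) / 2| ≤ B * r ^ (α + 2)) :
    heisDist (x, y, z) (p, q, 0) ≤ (2 * E + Real.sqrt B) * r ^ (1 + α / 2) := by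
  have hexp : E * r ^ (α + 1) ≤ E * r ^ (1 + α / 2) := mul_le_mul_of_nonneg_left
    (Real.rpow_le_rpow_of_exponent_ge' hr₀ hr₁ (by positivity) (by linarith)) hE
  have hsq : r ^ (α + 2) = (r ^ (1 + α / 2)) ^ 2 := by
    rw [← Real.rpow_natCast, ← Real.rpow_mul hr₀]; ring_nf
  exact heisDist_horizontal_le (by positivity) (hx.trans hexp) (hy.trans hexp) (hsq ▸ hz)

variable {s : Set ℝ} {γ1 γ2 γ3 g1 g2 g3 : ℝ → ℝ} {x x₀ a b E M α : ℝ}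

theorem hasDerivWithinAt_vertical_error (hd1 : HasDerivWithinAt γ1 (g1 x) s x)
    (hd2 : HasDerivWithinAt γ2 (g2 x) s x) (hd3 : HasDerivWithinAt γ3 (g3 x) s x)
    (hhoriz : g3 x = (γ1 x * g2 x - γ2 x * g1 x) / 2) :
    HasDerivWithinAt (fun v => γ3 v - ((v - x₀) * a * γ2 v - (v - x₀) * b * γ1 v) / 2)
      (((γ1 x - (x - x₀) * a) * (g2 x + b) - (γ2 x - (x - x₀) * b) * (g1 x + a)) / 2) s x := by
  have hline := (((((hasDerivWithinAt_id x s).sub_const x₀).mul_const a).mul hd2).sub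
    ((((hasDerivWithinAt_id x s).sub_const x₀).mul_const b).mul hd1)).div_const 2
  refine (hd3.sub hline).congr_deriv ?_
  simp only [id_eq, hhoriz]
  ring

theorem abs_vertical_error_le (hs : Convex ℝ s) (hx₀ : x₀ ∈ s) (hE : 0 ≤ E) (hM : 0 ≤ M)
    (hα : 0 ≤ α) (hd1 : ∀ x ∈ s, HasDerivWithinAt γ1 (g1 x) s x)
    (hd2 : ∀ x ∈ s, HasDerivWithinAt γ2 (g2 x) s x)
    (hd3 : ∀ x ∈ s, HasDerivWithinAt γ3 (g3 x) s x)
    (hhoriz : ∀ x ∈ s, g3 x = (γ1 x * g2 x - γ2 x * g1 x) / 2)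
    (h1 : ∀ x ∈ s, |γ1 x - (x - x₀) * a| ≤ E * |x - x₀| ^ (α + 1))
    (h2 : ∀ x ∈ s, |γ2 x - (x - x₀) * b| ≤ E * |x - x₀| ^ (α + 1))
    (hg1 : ∀ x ∈ s, |g1 x + a| ≤ M) (hg2 : ∀ x ∈ s, |g2 x + b| ≤ M) (hx : x ∈ s) :
    |γ3 x - γ3 x₀ - ((x - x₀) * a * γ2 x - (x - x₀) * b * γ1 x) / 2|
      ≤ E * M * |x - x₀| ^ (α + 2) := by
  have hderiv_le : ∀ v ∈ s,
      |((γ1 v - (v - x₀) * a) * (g2 v + b) - (γ2 v - (v - x₀) * b) * (g1 v + a)) / 2|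
        ≤ E * M * |v - x₀| ^ (α + 1) := fun v hv => by
    have e1 : |(γ1 v - (v - x₀) * a) * (g2 v + b)| ≤ E * |v - x₀| ^ (α + 1) * M := by
      rw [abs_mul]; exact mul_le_mul (h1 v hv) (hg2 v hv) (abs_nonneg _) (by positivity)
    have e2 : |(γ2 v - (v - x₀) * b) * (g1 v + a)| ≤ E * |v - x₀| ^ (α + 1) * M := by
      rw [abs_mul]; exact mul_le_mul (h2 v hv) (hg1 v hv) (abs_nonneg _) (by positivity)
    rw [abs_div, abs_two]
    linarith [abs_sub _ _ |>.trans (add_le_add e1 e2)]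
  have key := abs_sub_le_of_abs_deriv_le_rpow hs hx₀ (by positivity) (by linarith)
    (fun v hv => hasDerivWithinAt_vertical_error (x₀ := x₀) (a := a) (b := b)
      (hd1 v hv) (hd2 v hv) (hd3 v hv) (hhoriz v hv)) hderiv_le hx
  rw [show α + 1 + 1 = α + 2 by ring] at key
  simpa [sub_right_comm] using key

end Heisenberg

theorem stmt_11_general (α : ℝ) (hα : α ∈ Ioc (0:ℝ) 1) (Cα : ℝ)
    (γ1 γ2 γ3 g1 g2 g3 : ℝ → ℝ) (t₀ a b : ℝ) (ht₀ : t₀ ∈ Icc (0:ℝ) 1)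
    (hd1 : ∀ t ∈ Icc (0:ℝ) 1, HasDerivWithinAt γ1 (g1 t) (Icc 0 1) t)
    (hd2 : ∀ t ∈ Icc (0:ℝ) 1, HasDerivWithinAt γ2 (g2 t) (Icc 0 1) t)
    (hd3 : ∀ t ∈ Icc (0:ℝ) 1, HasDerivWithinAt γ3 (g3 t) (Icc 0 1) t)
    (hH1 : ∀ t ∈ Icc (0:ℝ) 1, ∀ u ∈ Icc (0:ℝ) 1, |g1 t - g1 u| ≤ Cα * |t - u| ^ α)
    (hH2 : ∀ t ∈ Icc (0:ℝ) 1, ∀ u ∈ Icc (0:ℝ) 1, |g2 t - g2 u| ≤ Cα * |t - u| ^ α)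
    (hzero : γ1 t₀ = 0 ∧ γ2 t₀ = 0 ∧ γ3 t₀ = 0)
    (hder0 : g1 t₀ = a ∧ g2 t₀ = b ∧ g3 t₀ = 0)
    (hhoriz : ∀ t ∈ Icc (0:ℝ) 1, g3 t = (γ1 t * g2 t - γ2 t * g1 t) / 2) :
    ∃ C : ℝ, 0 < C ∧ ∀ t ∈ Icc (0:ℝ) 1,
      heisDist (γ1 t, γ2 t, γ3 t) ((t - t₀) * a, (t - t₀) * b, 0)
        ≤ C * |t - t₀| ^ (1 + α / 2) := by
  obtain ⟨hα0, -⟩ := hα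
  obtain ⟨hz1, hz2, hz3⟩ := hzero
  obtain ⟨rfl, rfl, -⟩ := hder0
  have hI : Convex ℝ (Icc (0:ℝ) 1) := convex_Icc 0 1
  have hCα : 0 ≤ Cα := (abs_nonneg _).trans (by simpa using hH1 0 (by simp) 1 (by simp))
  have hdist : ∀ t ∈ Icc (0:ℝ) 1, |t - t₀| ≤ 1 := fun t ht =>
    abs_sub_le_of_nonneg_of_le ht.1 ht.2 ht₀.1 ht₀.2
  set M := Cα + 2 * |g1 t₀| + 2 * |g2 t₀|
  have hg1 : ∀ t ∈ Icc (0:ℝ) 1, |g1 t + g1 t₀| ≤ M := fun t ht =>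
    (abs_add_le_of_holder hCα hα0.le (hdist t ht) (hH1 t ht t₀ ht₀)).trans
      (by linarith [abs_nonneg (g2 t₀)])
  have hg2 : ∀ t ∈ Icc (0:ℝ) 1, |g2 t + g2 t₀| ≤ M := fun t ht =>
    (abs_add_le_of_holder hCα hα0.le (hdist t ht) (hH2 t ht t₀ ht₀)).trans
      (by linarith [abs_nonneg (g1 t₀)])
  have hx : ∀ t ∈ Icc (0:ℝ) 1, |γ1 t - (t - t₀) * g1 t₀| ≤ Cα * |t - t₀| ^ (α + 1) :=
    fun t ht => by
      simpa [hz1] using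
        abs_sub_sub_le_of_holder_deriv hI ht₀ hCα hα0.le hd1 (fun v hv => hH1 v hv t₀ ht₀) ht
  have hy : ∀ t ∈ Icc (0:ℝ) 1, |γ2 t - (t - t₀) * g2 t₀| ≤ Cα * |t - t₀| ^ (α + 1) :=
    fun t ht => by
      simpa [hz2] using
        abs_sub_sub_le_of_holder_deriv hI ht₀ hCα hα0.le hd2 (fun v hv => hH2 v hv t₀ ht₀) ht
  refine ⟨2 * Cα + Real.sqrt (Cα * M) + 1, by positivity, fun t ht => ?_⟩
  have hz := abs_vertical_error_le hI ht₀ hCα (by positivity) hα0.le hd1 hd2 hd3 hhoriz hx hy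
    hg1 hg2 ht
  rw [hz3, sub_zero] at hz
  calc _ ≤ (2 * Cα + Real.sqrt (Cα * M)) * |t - t₀| ^ (1 + α / 2) :=
        heisDist_horizontal_le_rpow (abs_nonneg _) (hdist t ht) hα0.le hCα (hx t ht) (hy t ht) hz
    _ ≤ (2 * Cα + Real.sqrt (Cα * M) + 1) * |t - t₀| ^ (1 + α / 2) :=
        mul_le_mul_of_nonneg_right (by linarith) (by positivity)

/-- If `γ : [0,1] → ℍ¹` is a horizontal `C^{1,α}` curve with
`γ(t₀) = 0` and `γ'(t₀) = (a,b,0)`, and `L(t) = ((t−t₀)a, (t−t₀)b, 0)` is its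
horizontal tangent line at `t₀`, then `d(γ(t), L(t)) ≲ |t−t₀|^{1+α/2}`. -/
theorem stmt_11 (α : ℝ) (hα : α ∈ Ioc (0:ℝ) 1) (Cα : ℝ)
    (γ1 γ2 γ3 g1 g2 g3 : ℝ → ℝ) (t₀ a b : ℝ) (ht₀ : t₀ ∈ Icc (0:ℝ) 1)
    (hd1 : ∀ t ∈ Icc (0:ℝ) 1, HasDerivWithinAt γ1 (g1 t) (Icc 0 1) t)
    (hd2 : ∀ t ∈ Icc (0:ℝ) 1, HasDerivWithinAt γ2 (g2 t) (Icc 0 1) t)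
    (hd3 : ∀ t ∈ Icc (0:ℝ) 1, HasDerivWithinAt γ3 (g3 t) (Icc 0 1) t)
    (hH1 : ∀ t ∈ Icc (0:ℝ) 1, ∀ u ∈ Icc (0:ℝ) 1, |g1 t - g1 u| ≤ Cα * |t - u| ^ α)
    (hH2 : ∀ t ∈ Icc (0:ℝ) 1, ∀ u ∈ Icc (0:ℝ) 1, |g2 t - g2 u| ≤ Cα * |t - u| ^ α)
    (hH3 : ∀ t ∈ Icc (0:ℝ) 1, ∀ u ∈ Icc (0:ℝ) 1, |g3 t - g3 u| ≤ Cα * |t - u| ^ α)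
    (hzero : γ1 t₀ = 0 ∧ γ2 t₀ = 0 ∧ γ3 t₀ = 0)
    (hder0 : g1 t₀ = a ∧ g2 t₀ = b ∧ g3 t₀ = 0)
    (hhoriz : ∀ t ∈ Icc (0:ℝ) 1, g3 t = (γ1 t * g2 t - γ2 t * g1 t) / 2) :
    ∃ C : ℝ, 0 < C ∧ ∀ t ∈ Icc (0:ℝ) 1,
      heisDist (γ1 t, γ2 t, γ3 t) ((t - t₀) * a, (t - t₀) * b, 0)
        ≤ C * |t - t₀| ^ (1 + α / 2) :=
  stmt_11_general α hα Cα γ1 γ2 γ3 g1 g2 g3 t₀ a b ht₀ hd1 hd2 hd3 hH1 hH2 hzero hder0 hhoriz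
end

section
/- Let (X,d,μ) be a metric measure space, μ upper 1-regular, K a 1-dimensional CZ kernel satisfying the Hölder condition |K(x,p₁) − K(x,p₂)| ≤ B d(p₁,p₂)^β / d(p₁,x)^{1+β} for d(p₁,p₂) ≤ d(p₁,x)/2. Let γ : [a,b] → X and L : [a,b] → X be curves with d(γ(t), L(t)) ≤ C₀ |t − t₀|^{1+ε} for some ε > 0 and d(γ(t), p) ≥ 2^{-(j+2)} on the domain of integration, where p = γ(t₀), and suppose the set {t : d(γ(t),p) ≤ 2^{-(j-1)}} has diameter ≤ D 2^{-j}. If d(γ(t),L(t)) ≤ d(γ(t),p)/2 on this set, then ∫_{{t : 2^{-(j+2)} ≤ d(γ(t),p) ≤ 2^{-(j-1)}}} |K(p,γ(t)) − K(p,L(t))| dt ≤ C' 2^{-εβ j} for a constant C' depending only on B, β, C₀, D, ε. -/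
open Set MeasureTheory Metric

/-! On the annulus `2^{-(j+2)} ≤ d(γ(t),p) ≤ 2^{-(j-1)}` the parameter stays within `D 2^{-j}` of
`t₀`, so `d(γ(t),L(t)) ≲ 2^{-(1+ε)j}` and the Hölder condition bounds the integrand by
`2^{-(1+ε)βj} / 2^{-(1+β)j}`. Integrating over a parameter set of length `≲ 2^{-j}` gives
`2^{-(1+ε)βj + (1+β)j - j} = 2^{-εβj}`. -/

def IsHolderKernel {X : Type*} [MetricSpace X] (K : X → X → ℝ) (B β : ℝ) : Prop :=
  ∀ x p₁ p₂ : X, dist p₁ p₂ ≤ dist p₁ x / 2 →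
    |K x p₁ - K x p₂| ≤ B * dist p₁ p₂ ^ β / dist p₁ x ^ (1 + β)

theorem IsHolderKernel.abs_sub_le {X : Type*} [MetricSpace X] {K : X → X → ℝ} {B β : ℝ}
    (hK : IsHolderKernel K B β) (hB : 0 ≤ B) (hβ : 0 ≤ β) {x y z : X} {δ ρ : ℝ}
    (hyz : dist y z ≤ dist y x / 2) (hδ : dist y z ≤ δ) (hρ : 0 < ρ) (hρx : ρ ≤ dist y x) :
    |K x y - K x z| ≤ B * δ ^ β / ρ ^ (1 + β) :=
  have hδ₀ : 0 ≤ δ := dist_nonneg.trans hδ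
  (hK x y z hyz).trans <| by gcongr

theorem setIntegral_le_of_subset_closedBall {f : ℝ → ℝ} {S : Set ℝ} {t₀ r M : ℝ}
    (hM : 0 ≤ M) (hr : 0 ≤ r) (hS : S ⊆ closedBall t₀ r) (hf : ∀ t ∈ S, |f t| ≤ M) :
    ∫ t in S, f t ≤ M * (2 * r) := by
  calc ∫ t in S, f t ≤ ‖∫ t in S, f t‖ := le_abs_self _
    _ ≤ M * volume.real S :=
      norm_setIntegral_le_of_norm_le_const
        ((measure_mono hS).trans_lt measure_closedBall_lt_top) hf
    _ ≤ M * volume.real (closedBall t₀ r) := by gcongr; exact measure_closedBall_lt_top.ne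
    _ = M * (2 * r) := by rw [Real.volume_real_closedBall hr]

theorem holder_annulus_bound_eq {B β C₀ D ε h : ℝ} (hC₀ : 0 ≤ C₀) (hD : 0 < D) (hh : 0 < h) :
    B * (C₀ * (D * h) ^ (1 + ε)) ^ β / (h / 4) ^ (1 + β) * (2 * (D * h)) =
      2 * 4 ^ (1 + β) * B * C₀ ^ β * D ^ ((1 + ε) * β + 1) * h ^ (ε * β) := by
  rw [Real.mul_rpow hC₀ (by positivity), Real.mul_rpow hD.le hh.le,
    Real.mul_rpow (by positivity) (by positivity), ← Real.rpow_mul hD.le, ← Real.rpow_mul hh.le,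
    Real.div_rpow hh.le (by norm_num), Real.rpow_add hD, Real.rpow_one,
    show (1 + ε) * β = β + ε * β by ring, Real.rpow_add hh, Real.rpow_add hh, Real.rpow_one]
  field_simp

/-- Key CZ comparison estimate along a curve and its horizontal
tangent. If `K` is `β`-Hölder in its second variable, `d(γ(t),L(t)) ≤ C₀|t−t₀|^{1+ε}`,
`d(γ(t),L(t)) ≤ d(γ(t),p)/2` on the relevant set, and the preimage of the ball
`B(p,2^{-(j-1)})` has diameter `≤ D 2^{-j}`, then
`∫_{2^{-(j+2)} ≤ d(γ(t),p) ≤ 2^{-(j-1)}} |K(p,γ(t)) − K(p,L(t))| dt ≤ C' 2^{-εβj}`,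
with `C'` depending only on `B, β, C₀, D, ε`. -/
theorem stmt_16 (B β C₀ D ε : ℝ) (hB : 0 < B) (hβ : β ∈ Ioc (0:ℝ) 1)
    (hC₀ : 0 < C₀) (hD : 0 < D) (hε : 0 < ε) :
    ∃ C' : ℝ, 0 < C' ∧
      ∀ (X : Type) (_ : MetricSpace X)
        (K : X → X → ℝ)
        (_ : ∀ (x p₁ p₂ : X), dist p₁ p₂ ≤ dist p₁ x / 2 →
          |K x p₁ - K x p₂| ≤ B * dist p₁ p₂ ^ β / dist p₁ x ^ (1 + β))
        (a b : ℝ) (γ L : ℝ → X) (t₀ : ℝ) (_ : t₀ ∈ Icc a b) (p : X) (_ : γ t₀ = p)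
        (j : ℤ)
        (_ : ∀ t ∈ Icc a b, dist (γ t) (L t) ≤ C₀ * |t - t₀| ^ (1 + ε))
        (_ : ∀ t ∈ {t ∈ Icc a b | dist (γ t) p ≤ (2:ℝ) ^ (-(j:ℝ) + 1)},
          ∀ t' ∈ {t ∈ Icc a b | dist (γ t) p ≤ (2:ℝ) ^ (-(j:ℝ) + 1)},
            |t - t'| ≤ D * (2:ℝ) ^ (-(j:ℝ)))
        (_ : ∀ t ∈ {t ∈ Icc a b | dist (γ t) p ≤ (2:ℝ) ^ (-(j:ℝ) + 1)},
          dist (γ t) (L t) ≤ dist (γ t) p / 2),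
        ∫ t in {t ∈ Icc a b |
            (2:ℝ) ^ (-(j:ℝ) - 2) ≤ dist (γ t) p ∧ dist (γ t) p ≤ (2:ℝ) ^ (-(j:ℝ) + 1)},
          |K p (γ t) - K p (L t)|
        ≤ C' * (2:ℝ) ^ (-(ε * β * (j:ℝ))) := by
  refine ⟨2 * 4 ^ (1 + β) * B * C₀ ^ β * D ^ ((1 + ε) * β + 1), by positivity, ?_⟩
  intro X _ K hK a b γ L t₀ ht₀ p hp j hcurve hdiam hhalf
  set h : ℝ := (2:ℝ) ^ (-(j:ℝ))
  have hh : 0 < h := by positivity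
  have hinner : (2:ℝ) ^ (-(j:ℝ) - 2) = h / 4 := by
    rw [Real.rpow_sub two_pos]; norm_num [h]
  have hnear : ∀ t ∈ {t ∈ Icc a b | dist (γ t) p ≤ (2:ℝ) ^ (-(j:ℝ) + 1)}, |t - t₀| ≤ D * h :=
    fun t ht ↦ hdiam t ht t₀ ⟨ht₀, by rw [hp, dist_self]; positivity⟩
  calc _ ≤ B * (C₀ * (D * h) ^ (1 + ε)) ^ β / (h / 4) ^ (1 + β) * (2 * (D * h)) := by
        refine setIntegral_le_of_subset_closedBall (t₀ := t₀) (by positivity) (by positivity)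
          (fun t ht ↦ hnear t ⟨ht.1, ht.2.2⟩) fun t ht ↦ ?_
        rw [abs_abs]
        refine IsHolderKernel.abs_sub_le hK hB.le hβ.1.le (hhalf t ⟨ht.1, ht.2.2⟩)
          ((hcurve t ht.1).trans ?_) (by positivity) (hinner ▸ ht.2.1)
        gcongr
        exact hnear t ⟨ht.1, ht.2.2⟩
    _ = 2 * 4 ^ (1 + β) * B * C₀ ^ β * D ^ ((1 + ε) * β + 1) * h ^ (ε * β) :=
        holder_annulus_bound_eq hC₀.le hD hh
    _ = _ := by rw [← Real.rpow_mul zero_le_two]; ring_nf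
end
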